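/- arXiv:1901.08653 — 3 statements merged into one kernel-verified Lean document; each statement's English description precedes it below -/
import Mathlib

section
/- Let n be a positive integer and let i be an integer with 0 < i < n. Then the alternating sum over k from 0 to i of (-1)^k · (n/(n-k)) · C(n-k, k) · C(n-2k, i-k) equals 0, where the arithmetic is carried out in the rational numbers and a binomial coefficient C(m, r) with 0 ≤ m < r or with m < 0 arising here contributes 0 to the sum (when m < 0, the accompanying factor C(n-k, k) vanishes since n - k < k). Equivalently, working over ℚ: ∑_{k=0}^{i} (-1)^k · (n/(n-k)) · (n-k choose k) · (n-2k choose i-k) = 0. -/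
/-!
Write `n / (n - k) = 1 + k / (n - k)`. The first part is the alternating sum
`S(n, i) = ∑ (-1)^k C(n-k, k) C(n-2k, i-k)`, which equals `1`: since
`C(n-k, k) C(n-2k, i-k) = C(i, k) C(n-k, i)`, it is the coefficient of `X^i` in
`((X + 1) - 1)^i (X + 1)^(n-i) = X^i (X + 1)^(n-i)`. In the second part
`k / (n - k) · C(n-k, k) = C(n-k-1, k-1)`, so after the shift `k ↦ k + 1` it is
`-S(n-2, i-1) = -1`.
-/

open Finset Polynomial

theorem Nat.choose_sub_mul_choose_sub_two_mul {n i k : ℕ} (hk : k ≤ i) :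
    (n - k).choose k * (n - 2 * k).choose (i - k) = i.choose k * (n - k).choose i := by
  rcases le_or_gt i (n - k) with hi | hi
  · rw [show n - 2 * k = n - k - k by omega, ← Nat.choose_mul hk, mul_comm]
  · rw [Nat.choose_eq_zero_of_lt hi, mul_zero]
    rcases le_or_gt k (n - k) with hkn | hkn
    · rw [Nat.choose_eq_zero_of_lt (show n - 2 * k < i - k by omega), mul_zero]
    · rw [Nat.choose_eq_zero_of_lt hkn, zero_mul]

theorem alternating_sum_choose_mul_choose_sub {R : Type*} [CommRing R] {n i : ℕ} (h : i ≤ n) :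
    ∑ k ∈ range (i + 1), (-1 : R) ^ k * i.choose k * (n - k).choose i = 1 := by
  have hpoly : X ^ i * (X + 1) ^ (n - i) =
      ∑ k ∈ range (i + 1), C ((-1 : R) ^ k * i.choose k) * (X + 1) ^ (n - k) := by
    rw [show (X : R[X]) ^ i = (-1 + (X + 1)) ^ i by ring, add_pow, sum_mul]
    refine sum_congr rfl fun k hk => ?_
    rw [show n - k = i - k + (n - i) by grind, pow_add]
    simp only [C_mul, C_pow, C_neg, C_1, map_natCast]
    ring
  have hcoeff := congrArg (coeff · i) hpoly
  simpa only [finsetSum_coeff, coeff_C_mul, coeff_X_add_one_pow, coeff_X_pow_mul', le_refl,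
    if_true, Nat.sub_self, Nat.choose_zero_right, Nat.cast_one, eq_comm] using hcoeff

theorem alternating_sum_pascal_vertical {R : Type*} [CommRing R] {n i : ℕ} (h : i ≤ n) :
    ∑ k ∈ range (i + 1), (-1 : R) ^ k * (n - k).choose k * (n - 2 * k).choose (i - k) = 1 := by
  refine Eq.trans (sum_congr rfl fun k hk => ?_) (alternating_sum_choose_mul_choose_sub h)
  rw [mul_assoc, mul_assoc, ← Nat.cast_mul, ← Nat.cast_mul,
    Nat.choose_sub_mul_choose_sub_two_mul (by grind)]

theorem add_one_div_add_one_mul_choose {K : Type*} [Field K] [CharZero K] (m k : ℕ) :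
    ((k : K) + 1) / ((m : K) + 1) * (m + 1).choose (k + 1) = m.choose k := by
  rw [div_mul_eq_mul_div, div_eq_iff (Nat.cast_add_one_ne_zero m)]
  have h := congrArg (Nat.cast : ℕ → K) (Nat.add_one_mul_choose_eq m k)
  push_cast at h
  linear_combination -h

theorem alternating_sum_div_mul_pascal_vertical {K : Type*} [Field K] [CharZero K] {n i : ℕ}
    (hi : 0 < i) (hin : i < n) :
    ∑ k ∈ range (i + 1), (-1 : K) ^ k * ((k : K) / ((n : K) - k)) *
      (n - k).choose k * (n - 2 * k).choose (i - k) = -1 := by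
  obtain ⟨j, rfl⟩ : ∃ j, i = j + 1 := ⟨i - 1, by omega⟩
  obtain ⟨m, rfl⟩ : ∃ m, n = m + 2 := ⟨n - 2, by omega⟩
  rw [sum_range_succ', Nat.cast_zero, zero_div, mul_zero, zero_mul, zero_mul, add_zero,
    ← neg_eq_iff_eq_neg, ← sum_neg_distrib]
  refine Eq.trans (sum_congr rfl fun k hk => ?_)
    (alternating_sum_pascal_vertical (R := K) (n := m) (by omega))
  have hkm : k ≤ m := by grind
  have hden : ((m + 2 : ℕ) : K) - ((k + 1 : ℕ) : K) = ((m - k : ℕ) : K) + 1 := by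
    push_cast [Nat.cast_sub hkm]; ring
  rw [hden, show m + 2 - (k + 1) = m - k + 1 by omega,
    show m + 2 - 2 * (k + 1) = m - 2 * k by omega, show j + 1 - (k + 1) = j - k by omega,
    Nat.cast_add_one, mul_assoc _ (_ / _), add_one_div_add_one_mul_choose, pow_succ]
  ring

/-- Linear dependence on vertically aligned entries in Pascal's triangle:
for `0 < i < n`, `∑_{k=0}^{i} (-1)^k · (n/(n-k)) · C(n-k, k) · C(n-2k, i-k) = 0` in `ℚ`.
Binomial coefficients with truncated (natural) subtraction realize the convention that
`C(m, r) = 0` for `0 ≤ m < r`, and when the top `n - 2k` would be negative the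
accompanying factor `C(n-k, k)` vanishes since `n - k < k`. -/
theorem pascal_vertical_dependence (n i : ℕ) (hi : 0 < i) (hin : i < n) :
    ∑ k ∈ Finset.range (i + 1),
      (-1 : ℚ) ^ k * ((n : ℚ) / ((n : ℚ) - (k : ℚ))) *
        (Nat.choose (n - k) k : ℚ) * (Nat.choose (n - 2 * k) (i - k) : ℚ) = 0 := by
  have hsplit : ∀ k ∈ range (i + 1), (n : ℚ) / (n - k) = 1 + k / (n - k) := fun k hk => by
    have hne : (n : ℚ) - k ≠ 0 := sub_ne_zero.mpr (by norm_cast; grind)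
    field_simp
    ring
  rw [sum_congr rfl fun k hk => by rw [hsplit k hk, mul_one_add, add_mul, add_mul],
    sum_add_distrib, alternating_sum_pascal_vertical hin.le,
    alternating_sum_div_mul_pascal_vertical hi hin, add_neg_cancel]
end

section
/- Let n be a positive integer and let i be an integer with 0 < i < n. Then, as an identity of integers, ∑_{k=0}^{i} (-1)^k · [C(n-k, k) + C(n-k-1, k-1)] · C(n-2k, i-k) = 0, where C(m, r) denotes the binomial coefficient with the conventions C(m, r) = 0 for 0 ≤ m < r, C(m, r) = 0 for r < 0 unless interpreting C(n-k-1, -1) = 0 at k = 0 (so the k = 0 term is C(n,0)·C(n, i) = C(n, i)), and any binomial coefficient whose top argument n-2k is negative is multiplied by a factor C(n-k,k) + C(n-k-1,k-1) that vanishes. -/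
/-- The Lucas-coefficient triangle `T(n, k) = C(n-k, k) + C(n-k-1, k-1)` as an integer,
with the convention `C(m, -1) = 0`, so that `T(n, 0) = C(n, 0) = 1`. -/
def lucasT (n k : ℕ) : ℤ :=
  (Nat.choose (n - k) k : ℤ) + if k = 0 then 0 else (Nat.choose (n - k - 1) (k - 1) : ℤ)

/-!
Since `C(n-k, k) · C(n-2k, i-k) = C(i, k) · C(n-k, i)`, the sum
`A(n, i) = ∑_{k ≤ i} (-1)^k C(n-k, k) C(n-2k, i-k)` is the `i`-th backward difference of the
degree-`i` polynomial `m ↦ C(m, i)` at `n`, so `A(n, i) = 1` whenever `i ≤ n`. Splitting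
`T(n, k) = C(n-k, k) + C(n-k-1, k-1)` and shifting `k` by one in the second part writes the
sum of the theorem as `A(n, i) - A(n-2, i-1) = 1 - 1`.
-/

open Finset

theorem sum_range_alternating_choose_mul_choose_sub {i n : ℕ} (h : i ≤ n) :
    ∑ k ∈ range (i + 1), (-1 : ℤ) ^ k * i.choose k * (n - k).choose i = 1 := by
  have hdiff := congr_fun (fwdDiff_iter_choose 0 i) (n - i)
  rw [fwdDiff_iter_eq_sum_shift, ← sum_range_reflect] at hdiff
  simp only [add_zero, Nat.choose_zero_right, Nat.cast_one, smul_eq_mul, mul_one] at hdiff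
  refine (sum_congr rfl fun k hk => ?_).trans hdiff
  have hk : k ≤ i := Nat.lt_succ_iff.mp (mem_range.mp hk)
  rw [Nat.add_sub_cancel, Nat.sub_sub_self hk, Nat.choose_symm hk,
    show n - i + (i - k) = n - k by omega]

theorem sum_range_alternating_choose_sub_mul_choose_sub_two_mul {i n : ℕ} (h : i ≤ n) :
    ∑ k ∈ range (i + 1), (-1 : ℤ) ^ k * (n - k).choose k * (n - 2 * k).choose (i - k) = 1 := by
  refine (sum_congr rfl fun k hk => ?_).trans (sum_range_alternating_choose_mul_choose_sub h)
  have hk : k ≤ i := Nat.lt_succ_iff.mp (mem_range.mp hk)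
  have hchoose := Nat.choose_mul (n := n - k) hk
  rw [Nat.sub_sub, ← two_mul] at hchoose
  rw [mul_assoc, mul_assoc, ← Nat.cast_mul, ← Nat.cast_mul, ← hchoose, Nat.mul_comm]

/-- For `0 < i < n`, `∑_{k=0}^{i} (-1)^k · [C(n-k, k) + C(n-k-1, k-1)] · C(n-2k, i-k) = 0`
as an identity of integers.  Natural subtraction in the binomial coefficients realizes the
convention `C(m, r) = 0` for `0 ≤ m < r`; terms whose top argument `n - 2k` would be
negative carry a vanishing factor `C(n-k, k) + C(n-k-1, k-1)`. -/
theorem pascal_vertical_dependence_int (n i : ℕ) (hi : 0 < i) (hin : i < n) :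
    ∑ k ∈ Finset.range (i + 1),
      (-1 : ℤ) ^ k * lucasT n k * (Nat.choose (n - 2 * k) (i - k) : ℤ) = 0 := by
  obtain ⟨m, rfl⟩ : ∃ m, i = m + 1 := ⟨i - 1, by omega⟩
  have hshifted : ∑ k ∈ range (m + 2), (-1 : ℤ) ^ k *
      (if k = 0 then 0 else ((n - k - 1).choose (k - 1) : ℤ)) * (n - 2 * k).choose (m + 1 - k)
      = -1 := by
    refine Eq.trans ?_ (congrArg Neg.neg
      (sum_range_alternating_choose_sub_mul_choose_sub_two_mul (show m ≤ n - 2 by omega)))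
    rw [sum_range_succ', ← sum_neg_distrib]
    simp only [Nat.add_one_ne_zero, if_true, if_false, add_zero, mul_zero, zero_mul]
    refine sum_congr rfl fun k _ => ?_
    rw [show n - (k + 1) - 1 = n - 2 - k by omega, show n - 2 * (k + 1) = n - 2 - 2 * k by omega,
      Nat.add_sub_cancel, Nat.add_sub_add_right, pow_succ]
    ring
  simp only [lucasT, mul_add, add_mul, sum_add_distrib]
  rw [sum_range_alternating_choose_sub_mul_choose_sub_two_mul hin.le, hshifted, add_neg_cancel]
end

section
/- (Lockwood's identity.) Let R be a commutative ring, let x, y ∈ R, and let n ≥ 1 be an integer. Then x^n + y^n = ∑_{k=0}^{⌊n/2⌋} (-1)^k · T(n, k) · (xy)^k · (x+y)^{n-2k}, where T(n, k) = C(n-k, k) + C(n-k-1, k-1) is the integer (n/(n-k))·C(n-k, k) (with T(n, 0) = 1). -/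
open Finset

lemma lucasT_zero_right (n : ℕ) : lucasT n 0 = 1 := by simp [lucasT]

lemma lucasT_eq_zero_of_lt (n k : ℕ) (hn : 2 ≤ n) (hk : n < 2 * k) : lucasT n k = 0 := by
  have hk₀ : k ≠ 0 := by omega
  simp only [lucasT, if_neg hk₀, Nat.choose_eq_zero_of_lt (by omega : n - k < k),
    Nat.choose_eq_zero_of_lt (by omega : n - k - 1 < k - 1), Nat.cast_zero, add_zero]

lemma lucasT_add_three_succ (n k : ℕ) (hk : k ≤ n) :
    lucasT (n + 3) (k + 1) = lucasT (n + 2) (k + 1) + lucasT (n + 1) k := by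
  obtain ⟨m, rfl⟩ := Nat.exists_eq_add_of_le hk
  have e₁ : k + m + 3 - (k + 1) = m + 2 := by omega
  have e₂ : k + m + 2 - (k + 1) = m + 1 := by omega
  have e₃ : k + m + 1 - k = m + 1 := by omega
  simp only [lucasT, e₁, e₂, e₃, Nat.add_sub_cancel, Nat.succ_ne_zero, if_false,
    Nat.choose_succ_succ' (m + 1)]
  rcases k with _ | k
  · simp only [Nat.choose_zero_right, if_true]
    push_cast
    ring
  · simp only [Nat.choose_succ_succ' m, Nat.add_one_sub_one, Nat.add_eq_zero_iff, one_ne_zero,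
      and_false, if_false, add_tsub_cancel_right]
    push_cast
    ring

section CommRing

variable {R : Type*} [CommRing R]

def lockwoodTerm (x y : R) (n k : ℕ) : R :=
  ((-1 : ℤ) ^ k * lucasT n k) • ((x * y) ^ k * (x + y) ^ (n - 2 * k))

def lockwoodSum (x y : R) (n : ℕ) : R :=
  ∑ k ∈ range (n / 2 + 1), lockwoodTerm x y n k

lemma lockwoodTerm_add_three_zero (x y : R) (n : ℕ) :
    lockwoodTerm x y (n + 3) 0 = (x + y) * lockwoodTerm x y (n + 2) 0 := by
  simp [lockwoodTerm, lucasT_zero_right, pow_succ, mul_comm]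

lemma lockwoodTerm_add_three_succ (x y : R) (n k : ℕ) (hk : 2 * k ≤ n + 1) :
    lockwoodTerm x y (n + 3) (k + 1) =
      (x + y) * lockwoodTerm x y (n + 2) (k + 1) - x * y * lockwoodTerm x y (n + 1) k := by
  obtain ⟨j, hj⟩ : ∃ j, n + 1 = 2 * k + j := ⟨n + 1 - 2 * k, by omega⟩
  rw [lockwoodTerm, lockwoodTerm, lockwoodTerm, lucasT_add_three_succ n k (by omega)]
  rcases j with _ | j
  · have hT : lucasT (n + 2) (k + 1) = 0 := lucasT_eq_zero_of_lt _ _ (by omega) (by omega)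
    have e₁ : n + 3 - 2 * (k + 1) = 0 := by omega
    have e₃ : n + 1 - 2 * k = 0 := by omega
    simp only [hT, e₁, e₃, zsmul_eq_mul]
    push_cast
    ring
  · have e₁ : n + 3 - 2 * (k + 1) = j + 1 := by omega
    have e₂ : n + 2 - 2 * (k + 1) = j := by omega
    have e₃ : n + 1 - 2 * k = j + 1 := by omega
    simp only [e₁, e₂, e₃, zsmul_eq_mul]
    push_cast
    ring

lemma lockwoodSum_eq_sum_range (x y : R) (n : ℕ) (hn : 2 ≤ n) :
    lockwoodSum x y n = ∑ k ∈ range ((n + 1) / 2 + 1), lockwoodTerm x y n k := by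
  refine sum_subset (range_subset_range.mpr (by omega)) fun k hk hk' => ?_
  simp only [mem_range] at hk hk'
  simp [lockwoodTerm, lucasT_eq_zero_of_lt n k hn (by omega)]

lemma lockwoodSum_add_three (x y : R) (n : ℕ) :
    lockwoodSum x y (n + 3) =
      (x + y) * lockwoodSum x y (n + 2) - x * y * lockwoodSum x y (n + 1) := by
  rw [lockwoodSum_eq_sum_range x y (n + 2) (by omega), lockwoodSum, lockwoodSum,
    show (n + 1) / 2 + 1 = (n + 3) / 2 by omega, show (n + 2 + 1) / 2 = (n + 3) / 2 by omega,
    sum_range_succ', sum_range_succ', mul_add, mul_sum, mul_sum, lockwoodTerm_add_three_zero,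
    ← sub_add_eq_add_sub, ← sum_sub_distrib]
  congr 1
  refine sum_congr rfl fun k hk => lockwoodTerm_add_three_succ x y n k ?_
  simp only [mem_range] at hk
  omega

theorem pow_succ_add_pow_succ_eq_lockwoodSum (x y : R) (n : ℕ) :
    x ^ (n + 1) + y ^ (n + 1) = lockwoodSum x y (n + 1) := by
  induction n using Nat.twoStepInduction with
  | zero => simp [lockwoodSum, lockwoodTerm, lucasT_zero_right]
  | one =>
    have hT : lucasT 2 1 = 2 := rfl
    simp only [lockwoodSum, lockwoodTerm, sum_range_succ, range_zero, sum_empty,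
      lucasT_zero_right, hT, zsmul_eq_mul]
    push_cast
    ring
  | more n ih₁ ih₂ =>
    rw [lockwoodSum_add_three, ← ih₁, ← ih₂]
    ring

end CommRing

/-- Lockwood's identity: in any commutative ring, for `n ≥ 1`,
`x^n + y^n = ∑_{k=0}^{⌊n/2⌋} (-1)^k · T(n, k) · (xy)^k · (x+y)^{n-2k}`. -/
theorem lockwood_identity {R : Type*} [CommRing R] (x y : R) (n : ℕ) (hn : 1 ≤ n) :
    x ^ n + y ^ n =
      ∑ k ∈ Finset.range (n / 2 + 1),
        ((-1 : ℤ) ^ k * lucasT n k) • ((x * y) ^ k * (x + y) ^ (n - 2 * k)) := by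
  obtain ⟨m, rfl⟩ := Nat.exists_eq_add_of_le' hn
  exact pow_succ_add_pow_succ_eq_lockwoodSum x y m
end
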